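/- arXiv:2104.03833 — 2 statements merged into one kernel-verified Lean document; each statement's English description precedes it below -/
import Mathlib

section
/- Let ψ : I → ℝ be a smooth function on an open interval I ⊆ ℝ, and let Γ = {t + iψ(t) : t ∈ I} ⊆ ℂ be its graph. Given a smooth map f : Γ → ℂⁿ (i.e., t ↦ f(t + iψ(t)) is smooth) and smooth n×n matrix functions B₁, B₂ on I × ℝ (viewed as a subset of ℂ), there exists a smooth map g : I × ℝ → ℂⁿ such that g = f on Γ and g satisfies the Pascali equation g_ζ̄ + B₁g + B₂ḡ = 0 at every point of Γ. One may take g(t + is) = f(t + iψ(t)) + f₁(t)(s − ψ(t)) for a suitable smooth f₁ : I → ℂⁿ. -/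
open Matrix MeasureTheory

/-- Componentwise Wirtinger derivative ∂/∂ζ̄ of a vector-valued function. -/
noncomputable def wdV {n : ℕ} (f : ℂ → Fin n → ℂ) (z : ℂ) : Fin n → ℂ :=
  (1 / 2 : ℂ) • (fderiv ℝ f z 1 + Complex.I • fderiv ℝ f z Complex.I)

/-- Wirtinger derivative ∂/∂ζ̄ of a scalar function. -/
noncomputable def wdC (f : ℂ → ℂ) (z : ℂ) : ℂ :=
  (1 / 2 : ℂ) * (fderiv ℝ f z 1 + Complex.I * fderiv ℝ f z Complex.I)

/-- Componentwise complex conjugation of a vector. -/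
def conjV {n : ℕ} (v : Fin n → ℂ) : Fin n → ℂ := fun i => starRingEnd ℂ (v i)

/-- The Pascali operator ∂̄_B(w) = w_ζ̄ + B₁ w + B₂ w̄. -/
noncomputable def dbarB {n : ℕ} (B₁ B₂ : ℂ → Matrix (Fin n) (Fin n) ℂ)
    (f : ℂ → Fin n → ℂ) (z : ℂ) : Fin n → ℂ :=
  wdV f z + (B₁ z) *ᵥ (f z) + (B₂ z) *ᵥ (conjV (f z))

/-- The adjoint operator ∂̄_B*(φ) = φ_ζ̄ − B₁ᵀ φ − B̄₂ᵀ φ̄. -/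
noncomputable def dbarBstar {n : ℕ} (B₁ B₂ : ℂ → Matrix (Fin n) (Fin n) ℂ)
    (f : ℂ → Fin n → ℂ) (z : ℂ) : Fin n → ℂ :=
  wdV f z - (B₁ z)ᵀ *ᵥ (f z) - ((B₂ z).map (starRingEnd ℂ))ᵀ *ᵥ (conjV (f z))

section Aux

variable {n : ℕ}

lemma contDiff_conj : ContDiff ℝ (⊤ : ℕ∞) (fun z : ℂ => (starRingEnd ℂ) z) :=
  Complex.conjCLE.toContinuousLinearMap.contDiff

end Aux

/-- extension of data on a smooth graph to a map solving the Pascali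
system at every point of the graph, of the form g(t+is) = f(t+iψ(t)) + (s−ψ(t))·f₁(t). -/
theorem pascali_extension_from_graph {n : ℕ} (a b : ℝ) (ψ : ℝ → ℝ)
    (hψ : ContDiffOn ℝ (⊤ : ℕ∞) ψ (Set.Ioo a b))
    (B₁ B₂ : ℂ → Matrix (Fin n) (Fin n) ℂ)
    (hB₁ : ∀ i j, ContDiffOn ℝ (⊤ : ℕ∞) (fun z => B₁ z i j) {z : ℂ | z.re ∈ Set.Ioo a b})
    (hB₂ : ∀ i j, ContDiffOn ℝ (⊤ : ℕ∞) (fun z => B₂ z i j) {z : ℂ | z.re ∈ Set.Ioo a b})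
    (f : ℂ → Fin n → ℂ)
    (hf : ContDiffOn ℝ (⊤ : ℕ∞) (fun t : ℝ => f ((t : ℂ) + (ψ t : ℂ) * Complex.I)) (Set.Ioo a b)) :
    ∃ g : ℂ → Fin n → ℂ, ∃ f₁ : ℝ → Fin n → ℂ,
      ContDiffOn ℝ (⊤ : ℕ∞) f₁ (Set.Ioo a b) ∧
      ContDiffOn ℝ (⊤ : ℕ∞) g {z : ℂ | z.re ∈ Set.Ioo a b} ∧
      (∀ t ∈ Set.Ioo a b, ∀ s : ℝ,
        g ((t : ℂ) + (s : ℂ) * Complex.I)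
          = f ((t : ℂ) + (ψ t : ℂ) * Complex.I) + ((s : ℂ) - (ψ t : ℂ)) • f₁ t) ∧
      (∀ z ∈ (fun t : ℝ => (t : ℂ) + (ψ t : ℂ) * Complex.I) '' Set.Ioo a b, g z = f z) ∧
      (∀ z ∈ (fun t : ℝ => (t : ℂ) + (ψ t : ℂ) * Complex.I) '' Set.Ioo a b,
        dbarB B₁ B₂ g z = 0) := by
  have hIo : IsOpen (Set.Ioo a b) := isOpen_Ioo
  have hSo : IsOpen {z : ℂ | z.re ∈ Set.Ioo a b} := hIo.preimage Complex.continuous_re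
  set γ : ℝ → ℂ := fun t => (t : ℂ) + (ψ t : ℂ) * Complex.I with hγdef
  have hγre : ∀ t, (γ t).re = t := by intro t; simp [hγdef]
  have hγim : ∀ t, (γ t).im = ψ t := by intro t; simp [hγdef]
  have hγmap : Set.MapsTo γ (Set.Ioo a b) {z : ℂ | z.re ∈ Set.Ioo a b} := by
    intro t ht; simpa [Set.mem_setOf_eq, hγre] using ht
  have hγsm : ContDiffOn ℝ (⊤ : ℕ∞) γ (Set.Ioo a b) := by
    apply ContDiffOn.add
    · exact Complex.ofRealCLM.contDiff.contDiffOn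
    · exact (Complex.ofRealCLM.contDiff.comp_contDiffOn hψ).mul contDiffOn_const
  set F : ℝ → Fin n → ℂ := fun t => f (γ t) with hFdef
  have hF : ContDiffOn ℝ (⊤ : ℕ∞) F (Set.Ioo a b) := hf
  have hF' : ContDiffOn ℝ (⊤ : ℕ∞) (deriv F) (Set.Ioo a b) := hF.deriv_of_isOpen hIo (by simp)
  have hψ' : ContDiffOn ℝ (⊤ : ℕ∞) (deriv ψ) (Set.Ioo a b) := hψ.deriv_of_isOpen hIo (by simp)
  set c : ℝ → ℂ := fun t => ((deriv ψ t : ℝ) : ℂ) - Complex.I with hcdef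
  have hcne : ∀ t, c t ≠ 0 := by
    intro t h
    have := congrArg Complex.im h
    simp [hcdef] at this
  have hcsm : ContDiffOn ℝ (⊤ : ℕ∞) c (Set.Ioo a b) :=
    (Complex.ofRealCLM.contDiff.comp_contDiffOn hψ').sub contDiffOn_const
  -- smoothness of matrix-vector products along the graph
  have hmv : ∀ (B : ℂ → Matrix (Fin n) (Fin n) ℂ),
      (∀ i j, ContDiffOn ℝ (⊤ : ℕ∞) (fun z => B z i j) {z : ℂ | z.re ∈ Set.Ioo a b}) →
      ∀ (w : ℝ → Fin n → ℂ), ContDiffOn ℝ (⊤ : ℕ∞) w (Set.Ioo a b) →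
      ContDiffOn ℝ (⊤ : ℕ∞) (fun t => (B (γ t)) *ᵥ (w t)) (Set.Ioo a b) := by
    intro B hB w hw
    rw [contDiffOn_pi]
    intro i
    have : (fun t => ((B (γ t)) *ᵥ (w t)) i)
        = fun t => ∑ j, B (γ t) i j * w t j := by
      funext t; simp [Matrix.mulVec, dotProduct]
    rw [this]
    apply ContDiffOn.sum
    intro j _
    exact ((hB i j).comp hγsm hγmap).mul
      ((contDiffOn_pi.mp hw) j)
  have hFconj : ContDiffOn ℝ (⊤ : ℕ∞) (fun t => conjV (F t)) (Set.Ioo a b) := by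
    rw [contDiffOn_pi]
    intro i
    exact contDiff_conj.comp_contDiffOn ((contDiffOn_pi.mp hF) i)
  set v : ℝ → Fin n → ℂ := fun t =>
    deriv F t + (2 : ℂ) • ((B₁ (γ t)) *ᵥ (F t)) + (2 : ℂ) • ((B₂ (γ t)) *ᵥ (conjV (F t)))
    with hvdef
  have hvsm : ContDiffOn ℝ (⊤ : ℕ∞) v (Set.Ioo a b) := by
    apply ContDiffOn.add
    apply ContDiffOn.add hF'
    · exact (hmv B₁ hB₁ F hF).const_smul (2 : ℂ)
    · exact (hmv B₂ hB₂ (fun t => conjV (F t)) hFconj).const_smul (2 : ℂ)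
  set f₁ : ℝ → Fin n → ℂ := fun t => (c t)⁻¹ • v t with hf₁def
  have hcinv : ContDiffOn ℝ (⊤ : ℕ∞) (fun t => (c t)⁻¹) (Set.Ioo a b) :=
    hcsm.inv (fun t _ => hcne t)
  have hf₁sm : ContDiffOn ℝ (⊤ : ℕ∞) f₁ (Set.Ioo a b) := by
    rw [contDiffOn_pi]
    intro i
    exact hcinv.mul ((contDiffOn_pi.mp hvsm) i)
  set g : ℂ → Fin n → ℂ := fun z =>
    F z.re + ((z.im : ℂ) - (ψ z.re : ℂ)) • f₁ z.re with hgdef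
  have hremap : Set.MapsTo (fun z : ℂ => z.re) {z : ℂ | z.re ∈ Set.Ioo a b} (Set.Ioo a b) :=
    fun z hz => hz
  have hresm : ContDiff ℝ (⊤ : ℕ∞) (fun z : ℂ => z.re) := Complex.reCLM.contDiff
  have hscal : ContDiffOn ℝ (⊤ : ℕ∞) (fun z : ℂ => (z.im : ℂ) - (ψ z.re : ℂ))
      {z : ℂ | z.re ∈ Set.Ioo a b} := by
    apply ContDiffOn.sub
    · exact (Complex.ofRealCLM.comp Complex.imCLM).contDiff.contDiffOn
    · exact Complex.ofRealCLM.contDiff.comp_contDiffOn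
        (hψ.comp hresm.contDiffOn hremap)
  have hgsm : ContDiffOn ℝ (⊤ : ℕ∞) g {z : ℂ | z.re ∈ Set.Ioo a b} := by
    rw [contDiffOn_pi]
    intro i
    apply ContDiffOn.add
    · exact (contDiffOn_pi.mp (hF.comp hresm.contDiffOn hremap)) i
    · exact hscal.mul
        ((contDiffOn_pi.mp (hf₁sm.comp hresm.contDiffOn hremap)) i)
  have key3 : ∀ t ∈ Set.Ioo a b, ∀ s : ℝ,
      g ((t : ℂ) + (s : ℂ) * Complex.I)
        = f ((t : ℂ) + (ψ t : ℂ) * Complex.I) + ((s : ℂ) - (ψ t : ℂ)) • f₁ t := by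
    intro t ht s
    simp only [hgdef, hFdef, hγdef]
    norm_num
  have key4 : ∀ z ∈ γ '' Set.Ioo a b, g z = f z := by
    rintro z ⟨t, ht, rfl⟩
    have := key3 t ht (ψ t)
    simpa [hγdef] using this
  refine ⟨g, f₁, hf₁sm, hgsm, key3, key4, ?_⟩
  -- the Pascali equation on the graph
  rintro z ⟨t₀, ht₀, rfl⟩
  have hFt : HasDerivAt F (deriv F t₀) t₀ :=
    ((hF.contDiffAt (hIo.mem_nhds ht₀)).differentiableAt (by simp)).hasDerivAt
  have hψt : HasDerivAt ψ (deriv ψ t₀) t₀ :=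
    ((hψ.contDiffAt (hIo.mem_nhds ht₀)).differentiableAt (by simp)).hasDerivAt
  have hf₁t : HasDerivAt f₁ (deriv f₁ t₀) t₀ :=
    ((hf₁sm.contDiffAt (hIo.mem_nhds ht₀)).differentiableAt (by simp)).hasDerivAt
  set z₀ : ℂ := γ t₀ with hz₀
  have ht₀re : z₀.re = t₀ := hγre t₀
  have hre : HasFDerivAt (fun z : ℂ => z.re) (Complex.reCLM : ℂ →L[ℝ] ℝ) z₀ :=
    Complex.reCLM.hasFDerivAt
  have hFz : HasFDerivAt F
      (ContinuousLinearMap.smulRight (1 : ℝ →L[ℝ] ℝ) (deriv F t₀)) z₀.re := by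
    rw [ht₀re]; exact hFt.hasFDerivAt
  have hA : HasFDerivAt (fun z : ℂ => F z.re)
      ((ContinuousLinearMap.smulRight (1 : ℝ →L[ℝ] ℝ) (deriv F t₀)).comp
        (Complex.reCLM : ℂ →L[ℝ] ℝ)) z₀ := hFz.comp z₀ hre
  have hψz : HasFDerivAt (fun t : ℝ => (ψ t : ℂ))
      (ContinuousLinearMap.smulRight (1 : ℝ →L[ℝ] ℝ)
        ((deriv ψ t₀ : ℝ) : ℂ)) z₀.re := by
    rw [ht₀re]; exact hψt.ofReal_comp.hasFDerivAt
  have hψc : HasFDerivAt (fun z : ℂ => (ψ z.re : ℂ))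
      ((ContinuousLinearMap.smulRight (1 : ℝ →L[ℝ] ℝ)
        ((deriv ψ t₀ : ℝ) : ℂ)).comp (Complex.reCLM : ℂ →L[ℝ] ℝ)) z₀ := hψz.comp z₀ hre
  have him : HasFDerivAt (fun z : ℂ => (z.im : ℂ))
      (Complex.ofRealCLM.comp Complex.imCLM) z₀ :=
    (Complex.ofRealCLM.comp Complex.imCLM).hasFDerivAt
  have hc' : HasFDerivAt (fun z : ℂ => (z.im : ℂ) - (ψ z.re : ℂ))
      ((Complex.ofRealCLM.comp Complex.imCLM : ℂ →L[ℝ] ℂ)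
        - (ContinuousLinearMap.smulRight (1 : ℝ →L[ℝ] ℝ)
          ((deriv ψ t₀ : ℝ) : ℂ)).comp (Complex.reCLM : ℂ →L[ℝ] ℝ)) z₀ := him.sub hψc
  have hf₁z : HasFDerivAt f₁
      (ContinuousLinearMap.smulRight (1 : ℝ →L[ℝ] ℝ) (deriv f₁ t₀)) z₀.re := by
    rw [ht₀re]; exact hf₁t.hasFDerivAt
  have hf₁c : HasFDerivAt (fun z : ℂ => f₁ z.re)
      ((ContinuousLinearMap.smulRight (1 : ℝ →L[ℝ] ℝ) (deriv f₁ t₀)).comp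
        (Complex.reCLM : ℂ →L[ℝ] ℝ)) z₀ := hf₁z.comp z₀ hre
  have hg : HasFDerivAt g _ z₀ := hA.add (hc'.smul hf₁c)
  have hfd := hg.fderiv
  have him0 : ((z₀.im : ℝ) : ℂ) = ((ψ t₀ : ℝ) : ℂ) := by rw [hγim]
  have hL1 : fderiv ℝ g z₀ 1 = deriv F t₀ - (((deriv ψ t₀ : ℝ) : ℂ)) • f₁ t₀ := by
    rw [hfd]
    simp only [ContinuousLinearMap.add_apply, ContinuousLinearMap.comp_apply,
      ContinuousLinearMap.smulRight_apply, ContinuousLinearMap.sub_apply,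
      ContinuousLinearMap.smul_apply, ContinuousLinearMap.one_apply,
      Complex.reCLM_apply, Complex.imCLM_apply, Complex.ofRealCLM_apply,
      Complex.one_re, Complex.one_im, ht₀re, him0, sub_self, zero_smul]
    simp
    module
  have hLI : fderiv ℝ g z₀ Complex.I = f₁ t₀ := by
    rw [hfd]
    simp only [ContinuousLinearMap.add_apply, ContinuousLinearMap.comp_apply,
      ContinuousLinearMap.smulRight_apply, ContinuousLinearMap.sub_apply,
      ContinuousLinearMap.smul_apply, ContinuousLinearMap.one_apply,
      Complex.reCLM_apply, Complex.imCLM_apply, Complex.ofRealCLM_apply,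
      Complex.I_re, Complex.I_im, ht₀re, him0, sub_self, zero_smul]
    simp
  have hgz : g z₀ = F t₀ := by
    have := key4 _ ⟨t₀, ht₀, rfl⟩
    simpa [hFdef] using this
  show dbarB B₁ B₂ g z₀ = 0
  funext i
  have hf₁i : f₁ t₀ i = (c t₀)⁻¹ *
      (deriv F t₀ i + 2 * ((B₁ z₀) *ᵥ (F t₀)) i + 2 * ((B₂ z₀) *ᵥ (conjV (F t₀))) i) := by
    simp [hf₁def, hvdef, hz₀, Pi.smul_apply, smul_eq_mul]
    ring
  have hcne0 : ((deriv ψ t₀ : ℝ) : ℂ) - Complex.I ≠ 0 := hcne t₀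
  simp only [dbarB, wdV, hL1, hLI, hgz, Pi.add_apply, Pi.smul_apply, Pi.sub_apply,
    Pi.zero_apply, smul_eq_mul]
  rw [hf₁i]
  simp only [hcdef]
  field_simp
  ring
end

section
/- (Carleman-type approximation on ℝ, scalar reduction for the trivial system) Given a continuous function f : ℝ → ℂ and a continuous strictly positive function ε : ℝ → (0, ∞), there exists an entire function g : ℂ → ℂ such that |f(x) − g(x)| < ε(x) for every x ∈ ℝ. -/
/-!
The key step is a Runge-type approximation with smallness on a disc. For a continuous,
compactly supported `t : ℝ → ℂ` vanishing on `(-a, a)`, the Gauss–Weierstrass transform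
`(s / √π) ∫ t(u) exp(-s² (z - u)²) du` is entire in `z`, tends to `t` uniformly on `ℝ` as
`s → ∞`, and tends to `0` uniformly on `|z| < a / 2`, where `Re (z - u)² ≥ a² / 4` on the support.

Starting from `S₀ = 0`, the error `f - Sₙ` is multiplied by a cutoff equal to `1` on
`n ≤ |x| ≤ n + 1` and vanishing on `|x| < n - 1`, and `Sₙ₊₁ - Sₙ` is such an approximation of
it, with tolerance `2⁻ⁿ⁻² min ε` over `|x| ≤ n + 1`. The corrections are small on discs of radius
`(n - 1) / 2`, so `Sₙ` converges locally uniformly to an entire `g`; on `|x| < n` the error of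
`Sₙ` stays below `(1/2 - 2⁻ⁿ⁻¹) ε(x)`, whence `|f - g| ≤ ε / 2 < ε` on `ℝ`.
-/

open MeasureTheory Complex Filter Set Metric
open scoped Real Topology

lemma integrable_exp_neg_mul_sub_sq {b : ℝ} (hb : 0 < b) (x : ℝ) :
    Integrable fun u : ℝ => rexp (-b * (x - u) ^ 2) :=
  (integrable_exp_neg_mul_sq hb).comp_sub_left x

lemma integral_exp_neg_mul_sub_sq (b x : ℝ) :
    ∫ u : ℝ, rexp (-b * (x - u) ^ 2) = √(π / b) := by
  rw [integral_sub_left_eq_self (fun v => rexp (-b * v ^ 2)), integral_gaussian]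

lemma exists_norm_sub_le_add_mul_sq {E : Type*} [SeminormedAddCommGroup E] {t : ℝ → E}
    (ht : UniformContinuous t) {M : ℝ} (hM : ∀ u, ‖t u‖ ≤ M) {η : ℝ} (hη : 0 < η) :
    ∃ C, 0 ≤ C ∧ ∀ u x, ‖t u - t x‖ ≤ η + C * (x - u) ^ 2 := by
  obtain ⟨δ, hδ, hδt⟩ := Metric.uniformContinuous_iff.1 ht η hη
  have hM0 : 0 ≤ M := (norm_nonneg _).trans (hM 0)
  refine ⟨2 * M / δ ^ 2, by positivity, fun u x => ?_⟩
  rcases lt_or_ge (dist u x) δ with hnear | hfar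
  · have := hδt hnear
    rw [dist_eq_norm] at this
    nlinarith [sq_nonneg (x - u), div_nonneg (mul_nonneg zero_le_two hM0) (sq_nonneg δ)]
  · have hδx : δ ^ 2 ≤ (x - u) ^ 2 := by
      rw [Real.dist_eq] at hfar
      nlinarith [abs_nonneg (u - x), sq_abs (u - x)]
    calc ‖t u - t x‖ ≤ 2 * M := by linarith [norm_sub_le (t u) (t x), hM u, hM x]
      _ ≤ 2 * M / δ ^ 2 * (x - u) ^ 2 := by
          rw [div_mul_eq_mul_div, le_div_iff₀ (by positivity)]
          exact mul_le_mul_of_nonneg_left hδx (by positivity)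
      _ ≤ η + 2 * M / δ ^ 2 * (x - u) ^ 2 := le_add_of_nonneg_left hη.le

lemma sq_mul_exp_neg_mul_sq_le {b : ℝ} (hb : 0 < b) (w : ℝ) :
    w ^ 2 * rexp (-b * w ^ 2) ≤ 2 / b * rexp (-(b / 2) * w ^ 2) := by
  have hy : b / 2 * w ^ 2 * rexp (-(b / 2) * w ^ 2) ≤ 1 := by
    rw [neg_mul, Real.exp_neg, ← div_eq_mul_inv, div_le_one (Real.exp_pos _)]
    linarith [Real.add_one_le_exp (b / 2 * w ^ 2)]
  have hsplit : rexp (-b * w ^ 2) = rexp (-(b / 2) * w ^ 2) * rexp (-(b / 2) * w ^ 2) := by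
    rw [← Real.exp_add]; ring_nf
  calc w ^ 2 * rexp (-b * w ^ 2)
      = 2 / b * (b / 2 * w ^ 2 * rexp (-(b / 2) * w ^ 2)) * rexp (-(b / 2) * w ^ 2) := by
        rw [hsplit]; field_simp
    _ ≤ 2 / b * rexp (-(b / 2) * w ^ 2) := by
        gcongr
        exact mul_le_of_le_one_right (by positivity) hy

/-- The Gauss–Weierstrass transform of `t` at width `1 / s`, evaluated at complex points. -/
noncomputable def gaussConv (t : ℝ → ℂ) (s : ℝ) (z : ℂ) : ℂ :=
  (s / √π) • ∫ u : ℝ, t u * cexp (-(s : ℂ) ^ 2 * (z - u) ^ 2)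

section GaussConv

variable {t : ℝ → ℂ}

lemma norm_cexp_neg_sq_mul_sub_sq (s : ℝ) (z : ℂ) (u : ℝ) :
    ‖cexp (-(s : ℂ) ^ 2 * (z - u) ^ 2)‖ = rexp (-s ^ 2 * ((z.re - u) ^ 2 - z.im ^ 2)) := by
  rw [Complex.norm_exp]
  congr 1
  simp [sq, Complex.mul_re, Complex.mul_im]

lemma cexp_neg_sq_mul_sub_sq_ofReal (s x u : ℝ) :
    cexp (-(s : ℂ) ^ 2 * (x - u) ^ 2) = rexp (-s ^ 2 * (x - u) ^ 2) := by
  push_cast; rfl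

lemma integrable_mul_cexp_neg_sq_mul_sub_sq (ht : Continuous t) (hcs : HasCompactSupport t)
    (s : ℝ) (z : ℂ) : Integrable fun u : ℝ => t u * cexp (-(s : ℂ) ^ 2 * (z - u) ^ 2) :=
  (ht.mul (by fun_prop)).integrable_of_hasCompactSupport hcs.mul_right

lemma gaussConv_ofReal_sub (ht : Continuous t) (hcs : HasCompactSupport t) {s : ℝ} (hs : 0 < s)
    (x : ℝ) :
    gaussConv t s x - t x = (s / √π) • ∫ u : ℝ, (t u - t x) * rexp (-s ^ 2 * (x - u) ^ 2) := by
  have hK : Integrable fun u : ℝ => (rexp (-s ^ 2 * (x - u) ^ 2) : ℂ) :=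
    (integrable_exp_neg_mul_sub_sq (pow_pos hs 2) x).ofReal
  have htK := integrable_mul_cexp_neg_sq_mul_sub_sq ht hcs s x
  simp only [cexp_neg_sq_mul_sub_sq_ofReal] at htK
  have hmass : (s / √π) • ∫ u : ℝ, (rexp (-s ^ 2 * (x - u) ^ 2) : ℂ) = 1 := by
    rw [integral_complex_ofReal, integral_exp_neg_mul_sub_sq, Real.sqrt_div' _ (sq_nonneg s),
      Real.sqrt_sq hs.le, Complex.real_smul, ← Complex.ofReal_mul,
      div_mul_div_cancel₀ (Real.sqrt_pos.2 Real.pi_pos).ne', div_self hs.ne', Complex.ofReal_one]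
  simp_rw [gaussConv, cexp_neg_sq_mul_sub_sq_ofReal, sub_mul]
  rw [integral_sub htK (hK.const_mul (t x)), integral_const_mul, smul_sub, ← mul_smul_comm,
    hmass, mul_one]

lemma norm_gaussConv_ofReal_sub_le (ht : Continuous t) (hcs : HasCompactSupport t) {s : ℝ}
    (hs : 0 < s) {η C : ℝ} (hC : 0 ≤ C) (htC : ∀ u x, ‖t u - t x‖ ≤ η + C * (x - u) ^ 2)
    (x : ℝ) : ‖gaussConv t s x - t x‖ ≤ η + 2 * √2 * C / s ^ 2 := by
  have hs2 : 0 < s ^ 2 := by positivity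
  let B : ℝ → ℝ := fun u =>
    η * rexp (-s ^ 2 * (x - u) ^ 2) + C * (2 / s ^ 2) * rexp (-(s ^ 2 / 2) * (x - u) ^ 2)
  have hB : Integrable B :=
    ((integrable_exp_neg_mul_sub_sq hs2 x).const_mul _).add
      ((integrable_exp_neg_mul_sub_sq (half_pos hs2) x).const_mul _)
  have hle : ∀ u, ‖(t u - t x) * (rexp (-s ^ 2 * (x - u) ^ 2) : ℂ)‖ ≤ B u := fun u => by
    rw [norm_mul, Complex.norm_real, Real.norm_of_nonneg (Real.exp_pos _).le]
    calc ‖t u - t x‖ * rexp (-s ^ 2 * (x - u) ^ 2)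
        ≤ (η + C * (x - u) ^ 2) * rexp (-s ^ 2 * (x - u) ^ 2) := by gcongr; exact htC u x
      _ = η * rexp (-s ^ 2 * (x - u) ^ 2) + C * ((x - u) ^ 2 * rexp (-s ^ 2 * (x - u) ^ 2)) := by
          ring
      _ ≤ B u := by
          dsimp only [B]
          rw [mul_assoc C]
          gcongr _ + _ * ?_
          exact sq_mul_exp_neg_mul_sq_le hs2 _
  have hBint : ∫ u, B u = η * (√π / s) + C * (2 / s ^ 2) * (√2 * √π / s) := by
    rw [integral_add ((integrable_exp_neg_mul_sub_sq hs2 x).const_mul _)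
      ((integrable_exp_neg_mul_sub_sq (half_pos hs2) x).const_mul _), integral_const_mul,
      integral_const_mul, integral_exp_neg_mul_sub_sq, integral_exp_neg_mul_sub_sq,
      Real.sqrt_div' _ hs2.le, Real.sqrt_sq hs.le, div_div_eq_mul_div, Real.sqrt_div' _ hs2.le,
      Real.sqrt_sq hs.le, Real.sqrt_mul' _ zero_le_two, mul_comm √π]
  have hπ : 0 < √π := Real.sqrt_pos.2 Real.pi_pos
  calc ‖gaussConv t s x - t x‖
      ≤ s / √π * ∫ u, B u := by
        rw [gaussConv_ofReal_sub ht hcs hs, norm_smul, Real.norm_of_nonneg (by positivity)]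
        gcongr
        exact norm_integral_le_of_norm_le hB (.of_forall hle)
    _ = η + 2 * √2 * C / s ^ 2 := by
        rw [hBint]; field_simp

theorem tendstoUniformly_gaussConv (ht : Continuous t) (hcs : HasCompactSupport t) :
    TendstoUniformly (fun s (x : ℝ) => gaussConv t s x) t atTop := by
  obtain ⟨M, hM⟩ := hcs.exists_bound_of_continuous ht
  have htu : UniformContinuous t :=
    ht.uniformContinuous_of_tendsto_cocompact hcs.is_zero_at_infty
  rw [Metric.tendstoUniformly_iff]
  intro η hη
  obtain ⟨C, hC, htC⟩ := exists_norm_sub_le_add_mul_sq htu hM (half_pos hη)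
  have hsmall : Tendsto (fun s : ℝ => 2 * √2 * C / s ^ 2) atTop (𝓝 0) :=
    tendsto_const_nhds.div_atTop (tendsto_pow_atTop two_ne_zero)
  filter_upwards [hsmall.eventually_lt_const (half_pos hη), eventually_gt_atTop 0]
    with s hsη hs x
  rw [dist_comm, dist_eq_norm]
  linarith [norm_gaussConv_ofReal_sub_le ht hcs hs hC htC x]

lemma norm_cexp_neg_sq_mul_sub_sq_le {a : ℝ} {z : ℂ} {u : ℝ} (hz : ‖z‖ < a / 2) (hu : a ≤ |u|)
    (s : ℝ) : ‖cexp (-(s : ℂ) ^ 2 * (z - u) ^ 2)‖ ≤ rexp (-s ^ 2 * (a / 2) ^ 2) := by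
  have hnorm : z.re ^ 2 + z.im ^ 2 ≤ (a / 2) ^ 2 := by
    nlinarith [Complex.sq_norm_sub_sq_re z, norm_nonneg z]
  have hre : |z.re| ≤ a / 2 := (Complex.abs_re_le_norm z).trans hz.le
  have hdist : a - |z.re| ≤ |z.re - u| := by
    have := abs_sub_abs_le_abs_sub u z.re
    rw [abs_sub_comm] at this
    linarith
  have hkey : (a / 2) ^ 2 ≤ (z.re - u) ^ 2 - z.im ^ 2 := by
    rw [← sq_abs (z.re - u)]
    nlinarith [sq_abs z.re, abs_nonneg z.re]
  rw [norm_cexp_neg_sq_mul_sub_sq, Real.exp_le_exp]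
  nlinarith [sq_nonneg s]

theorem tendstoUniformlyOn_gaussConv_zero (ht : Continuous t) (hcs : HasCompactSupport t) {a : ℝ}
    (ha : ∀ u, |u| < a → t u = 0) :
    TendstoUniformlyOn (gaussConv t) 0 atTop (ball 0 (a / 2)) := by
  rcases le_or_gt a 0 with ha0 | ha0
  · rw [ball_eq_empty.2 (by linarith)]
    exact tendstoUniformlyOn_empty
  have hdecay : Tendsto (fun s : ℝ => |s| ^ (1 : ℝ) * rexp (-(a / 2) ^ 2 * s ^ 2)) atTop (𝓝 0) :=
    (tendsto_rpow_abs_mul_exp_neg_mul_sq_cocompact (by positivity) 1).mono_left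
      atTop_le_cocompact
  have hbound : Tendsto (fun s : ℝ => (∫ u, ‖t u‖) / √π * (|s| ^ (1 : ℝ) *
      rexp (-(a / 2) ^ 2 * s ^ 2))) atTop (𝓝 0) := by
    simpa using hdecay.const_mul ((∫ u, ‖t u‖) / √π)
  rw [Metric.tendstoUniformlyOn_iff]
  intro η hη
  filter_upwards [hbound.eventually_lt_const hη, eventually_ge_atTop 0] with s hsη hs z hz
  rw [Pi.zero_apply, dist_zero_left]
  refine lt_of_le_of_lt ?_ hsη
  rw [abs_of_nonneg hs, Real.rpow_one]
  have hle : ∀ u, ‖t u * cexp (-(s : ℂ) ^ 2 * (z - u) ^ 2)‖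
      ≤ ‖t u‖ * rexp (-s ^ 2 * (a / 2) ^ 2) := by
    intro u
    rw [norm_mul]
    by_cases hu : |u| < a
    · simp [ha u hu]
    · exact mul_le_mul_of_nonneg_left
        (norm_cexp_neg_sq_mul_sub_sq_le (mem_ball_zero_iff.1 hz) (not_lt.1 hu) s) (norm_nonneg _)
  calc ‖gaussConv t s z‖ ≤ s / √π * ∫ u, ‖t u‖ * rexp (-s ^ 2 * (a / 2) ^ 2) := by
        rw [gaussConv, norm_smul, Real.norm_of_nonneg (by positivity)]
        gcongr
        exact norm_integral_le_of_norm_le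
          ((ht.integrable_of_hasCompactSupport hcs).norm.mul_const _) (.of_forall hle)
    _ = (∫ u, ‖t u‖) / √π * (s * rexp (-(a / 2) ^ 2 * s ^ 2)) := by
        rw [integral_mul_const]; ring_nf

theorem differentiable_gaussConv (ht : Continuous t) (hcs : HasCompactSupport t) (s : ℝ) :
    Differentiable ℂ (gaussConv t s) := by
  intro z₀
  let F' : ℂ → ℝ → ℂ := fun z u =>
    t u * (cexp (-(s : ℂ) ^ 2 * (z - u) ^ 2) * (-(s : ℂ) ^ 2 * (2 * (z - u))))
  have hF' : Continuous fun p : ℂ × ℝ => F' p.1 p.2 := by fun_prop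
  obtain ⟨C, hC⟩ := ((isCompact_closedBall z₀ 1).prod hcs.isCompact).exists_bound_of_continuousOn
    hF'.continuousOn
  have hderiv : ∀ z u, HasDerivAt (fun z : ℂ => t u * cexp (-(s : ℂ) ^ 2 * (z - u) ^ 2))
      (F' z u) z := fun z u => by
    simpa [F'] using
      ((((hasDerivAt_id z).sub_const (u : ℂ)).pow 2).const_mul (-(s : ℂ) ^ 2)).cexp.const_mul (t u)
  have hbound : ∀ z ∈ ball z₀ 1, ∀ u, ‖F' z u‖ ≤ (tsupport t).indicator (fun _ => C) u := by
    intro z hz u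
    by_cases hu : u ∈ tsupport t
    · rw [indicator_of_mem hu]
      exact hC (z, u) ⟨ball_subset_closedBall hz, hu⟩
    · simp [F', indicator_of_notMem hu, image_eq_zero_of_notMem_tsupport hu]
  have hint := hasDerivAt_integral_of_dominated_loc_of_deriv_le (ball_mem_nhds z₀ one_pos)
    (.of_forall fun z => (integrable_mul_cexp_neg_sq_mul_sub_sq ht hcs s z).aestronglyMeasurable)
    (integrable_mul_cexp_neg_sq_mul_sub_sq ht hcs s z₀)
    (hF'.comp (.prodMk_right z₀)).aestronglyMeasurable
    (.of_forall fun u z hz => hbound z hz u)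
    ((integrable_indicator_iff (isClosed_tsupport t).measurableSet).2
      (integrableOn_const hcs.isCompact.measure_ne_top))
    (.of_forall fun u z _ => hderiv z u)
  exact (hint.2.const_smul (s / √π)).differentiableAt

theorem exists_differentiable_approx_of_hasCompactSupport (ht : Continuous t)
    (hcs : HasCompactSupport t) {a : ℝ} (ha : ∀ u, |u| < a → t u = 0) {η : ℝ} (hη : 0 < η) :
    ∃ g : ℂ → ℂ, Differentiable ℂ g ∧ (∀ x : ℝ, ‖g x - t x‖ < η) ∧
      ∀ z ∈ ball (0 : ℂ) (a / 2), ‖g z‖ < η := by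
  obtain ⟨s, hreal, hball⟩ :=
    ((Metric.tendstoUniformly_iff.1 (tendstoUniformly_gaussConv ht hcs) η hη).and
      (Metric.tendstoUniformlyOn_iff.1 (tendstoUniformlyOn_gaussConv_zero ht hcs ha) η hη)).exists
  refine ⟨gaussConv t s, differentiable_gaussConv ht hcs s, fun x => ?_, fun z hz => ?_⟩
  · simpa [dist_eq_norm'] using hreal x
  · simpa using hball z hz

end GaussConv

theorem exists_cutoff_annulus (c : ℝ) :
    ∃ ψ : ℝ → ℝ, Continuous ψ ∧ HasCompactSupport ψ ∧ (∀ x, ψ x ∈ Icc 0 1) ∧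
      (∀ x, |x| < c - 1 → ψ x = 0) ∧ ∀ x, c ≤ |x| → |x| ≤ c + 1 → ψ x = 1 := by
  have hclosed : IsClosed ({x : ℝ | |x| ≤ c - 1} ∪ {x | c + 2 ≤ |x|}) :=
    (isClosed_le continuous_abs continuous_const).union
      (isClosed_le continuous_const continuous_abs)
  have hdisj : Disjoint ({x : ℝ | |x| ≤ c - 1} ∪ {x | c + 2 ≤ |x|})
      {x | c ≤ |x| ∧ |x| ≤ c + 1} := by
    rw [Set.disjoint_left]
    rintro x (hx | hx) ⟨h1, h2⟩ <;> simp only [mem_ofPred_eq] at hx <;> linarith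
  obtain ⟨ψ, hψ0, hψ1, hψ01⟩ := exists_continuous_zero_one_of_isClosed hclosed
    ((isClosed_le continuous_const continuous_abs).inter
      (isClosed_le continuous_abs continuous_const)) hdisj
  refine ⟨ψ, ψ.continuous, ?_, hψ01, fun x hx => hψ0 (.inl hx.le), fun x h1 h2 => hψ1 ⟨h1, h2⟩⟩
  refine HasCompactSupport.intro (isCompact_closedBall 0 (c + 2)) fun x hx => hψ0 (.inr ?_)
  rw [mem_closedBall_zero_iff, Real.norm_eq_abs, not_le] at hx
  exact hx.le

theorem exists_differentiable_tendsto_of_norm_sub_le {S : ℕ → ℂ → ℂ}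
    (hS : ∀ n, Differentiable ℂ (S n)) {c r : ℕ → ℝ} (hc : Summable c)
    (hr : Tendsto r atTop atTop)
    (hSc : ∀ n, ∀ z ∈ ball (0 : ℂ) (r n), ‖S (n + 1) z - S n z‖ ≤ c n) :
    ∃ g : ℂ → ℂ, Differentiable ℂ g ∧ ∀ z, Tendsto (fun n => S n z) atTop (𝓝 (g z)) := by
  have hsum : ∀ z, Summable fun n => S (n + 1) z - S n z := fun z =>
    hc.of_norm_bounded_eventually_nat <| (hr.eventually_gt_atTop ‖z‖).mono fun n hn =>
      hSc n z (mem_ball_zero_iff.2 hn)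
  refine ⟨fun z => S 0 z + ∑' n, (S (n + 1) z - S n z), fun z₀ => ?_, fun z => ?_⟩
  · obtain ⟨N, hN⟩ := eventually_atTop.1 (hr.eventually_ge_atTop (‖z₀‖ + 1))
    have htail : DifferentiableOn ℂ (fun z => ∑' n, (S (n + N + 1) z - S (n + N) z))
        (ball 0 (‖z₀‖ + 1)) :=
      differentiableOn_tsum_of_summable_norm ((summable_nat_add_iff N).2 hc)
        (fun n => ((hS _).sub (hS _)).differentiableOn) isOpen_ball fun n z hz =>
          hSc (n + N) z (ball_subset_ball (hN _ (Nat.le_add_left N n)) hz)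
    have heq : (fun z => S 0 z + ∑' n, (S (n + 1) z - S n z))
        = fun z => S N z + ∑' n, (S (n + N + 1) z - S (n + N) z) := by
      ext z
      rw [← (hsum z).sum_add_tsum_nat_add N, Finset.sum_range_sub (fun n => S n z)]
      ring
    rw [heq]
    exact ((hS N).differentiableAt.add (htail.differentiableAt
      (isOpen_ball.mem_nhds (by simp))))
  · have h := (hsum z).hasSum.tendsto_sum_nat.const_add (S 0 z)
    simp_rw [Finset.sum_range_sub (fun n => S n z), add_sub_cancel] at h
    exact h

theorem exists_seq_of_forall_exists {α : Type*} {p : α → Prop} {r : ℕ → α → α → Prop} {a : α}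
    (ha : p a) (h : ∀ n a, p a → ∃ b, p b ∧ r n a b) :
    ∃ s : ℕ → α, s 0 = a ∧ ∀ n, p (s n) ∧ r n (s n) (s (n + 1)) := by
  choose b hb using h
  let s : ℕ → {x // p x} := fun n => Nat.rec ⟨a, ha⟩ (fun n x => ⟨b n x x.2, (hb n x x.2).1⟩) n
  exact ⟨fun n => (s n).1, rfl, fun n => ⟨(s n).2, (hb n _ (s n).2).2⟩⟩

theorem exists_differentiable_correction {f : ℝ → ℂ} (hf : Continuous f) {S : ℂ → ℂ}
    (hS : Differentiable ℂ S) {ψ : ℝ → ℝ} (hψ : Continuous ψ) (hψcs : HasCompactSupport ψ) {a : ℝ}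
    (hψa : ∀ x, |x| < a → ψ x = 0) {η : ℝ} (hη : 0 < η) :
    ∃ S' : ℂ → ℂ, Differentiable ℂ S' ∧ (∀ x : ℝ, ‖S' x - S x - ψ x • (f x - S x)‖ < η) ∧
      ∀ z ∈ ball (0 : ℂ) (a / 2), ‖S' z - S z‖ < η := by
  obtain ⟨g, hg, hgt, hgz⟩ := exists_differentiable_approx_of_hasCompactSupport
    (t := fun x => ψ x • (f x - S x)) (hψ.smul (hf.sub (hS.continuous.comp continuous_ofReal)))
    (hψcs.smul_right) (fun x hx => by simp [hψa x hx]) hη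
  exact ⟨S + g, hS.add hg, fun x => by simpa using hgt x, fun z hz => by simpa using hgz z hz⟩

theorem exists_seq_pos_le_half_pow_mul {ε : ℝ → ℝ} (hε : Continuous ε) (hεpos : ∀ x, 0 < ε x) :
    ∃ η : ℕ → ℝ, ∀ n, 0 < η n ∧ η n ≤ (1 / 2) ^ n ∧
      ∀ x : ℝ, |x| ≤ n + 1 → η n ≤ (1 / 2) ^ (n + 2) * ε x := by
  choose δ hδ hδε using fun n : ℕ => (isCompact_closedBall (0 : ℝ) (n + 1)).exists_forall_le'
    hε.continuousOn fun x _ => hεpos x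
  refine ⟨fun n => (1 / 2) ^ (n + 2) * min 1 (δ n), fun n =>
    ⟨mul_pos (by positivity) (lt_min one_pos (hδ n)), ?_, fun x hx => ?_⟩⟩
  · exact (mul_le_of_le_one_right (by positivity) (min_le_left _ _)).trans
      (pow_le_pow_of_le_one (by norm_num) (by norm_num) (by omega))
  · exact mul_le_mul_of_nonneg_left ((min_le_right _ _).trans (hδε n x (by simpa using hx)))
      (by positivity)

theorem norm_sub_le_of_cutoff_corrections {f : ℝ → ℂ} {S : ℕ → ℝ → ℂ} {ψ : ℕ → ℝ → ℝ}
    {ε : ℝ → ℝ} (hψ01 : ∀ n x, ψ n x ∈ Icc 0 1)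
    (hψ1 : ∀ (n : ℕ) (x : ℝ), n ≤ |x| → |x| ≤ n + 1 → ψ n x = 1) (hε : ∀ x, 0 ≤ ε x)
    (hS : ∀ (n : ℕ) (x : ℝ), |x| < n + 1 →
      ‖S (n + 1) x - S n x - ψ n x • (f x - S n x)‖ ≤ (1 / 2) ^ (n + 2) * ε x) :
    ∀ (n : ℕ) (x : ℝ), |x| < n → ‖f x - S n x‖ ≤ (1 / 2 - (1 / 2) ^ (n + 1)) * ε x := by
  intro n
  induction n with
  | zero => intro x hx; exact absurd hx (by simp)
  | succ n ih =>
    intro x hx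
    have hsplit : f x - S (n + 1) x
        = (1 - ψ n x) • (f x - S n x) - (S (n + 1) x - S n x - ψ n x • (f x - S n x)) := by
      simp only [sub_smul, one_smul]; abel
    have hstep := hS n x (by exact_mod_cast hx)
    have hq : (1 / 2 : ℝ) ^ (n + 1) = 2 * (1 / 2) ^ (n + 1 + 1) := by ring
    have hq' : (1 / 2 : ℝ) ^ (n + 1 + 1) ≤ 1 / 4 :=
      (pow_le_pow_of_le_one (by norm_num) (by norm_num) (by omega : 2 ≤ n + 1 + 1)).trans_eq
        (by norm_num)
    rw [hsplit]
    refine (norm_sub_le _ _).trans ?_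
    rw [norm_smul, Real.norm_of_nonneg (sub_nonneg.2 (hψ01 n x).2)]
    rcases lt_or_ge |x| n with hin | hout
    · have h1 : (1 - ψ n x) * ‖f x - S n x‖ ≤ ‖f x - S n x‖ :=
        mul_le_of_le_one_left (norm_nonneg _) (by linarith [(hψ01 n x).1])
      nlinarith [ih x hin, hε x]
    · have hψ : ψ n x = 1 := hψ1 n x hout (by push_cast at hx; linarith)
      rw [hψ] at hstep ⊢
      nlinarith [hε x]

/-- classical Carleman approximation theorem on ℝ. -/
theorem carleman_approximation (f : ℝ → ℂ) (hf : Continuous f)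
    (ε : ℝ → ℝ) (hε : Continuous ε) (hεpos : ∀ x, 0 < ε x) :
    ∃ g : ℂ → ℂ, Differentiable ℂ g ∧ ∀ x : ℝ, ‖f x - g x‖ < ε x := by
  choose η hη0 hη1 hηε using exists_seq_pos_le_half_pow_mul hε hεpos
  choose ψ hψ hψcs hψ01 hψ0 hψ1 using fun n : ℕ => exists_cutoff_annulus n
  obtain ⟨S, -, hS⟩ := exists_seq_of_forall_exists (differentiable_const 0) fun n S hS =>
    exists_differentiable_correction hf hS (hψ n) (hψcs n) (hψ0 n) (hη0 n)
  obtain ⟨g, hg, hSg⟩ := exists_differentiable_tendsto_of_norm_sub_le (fun n => (hS n).1)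
    (Summable.of_nonneg_of_le (fun n => (hη0 n).le) hη1 summable_geometric_two)
    ((tendsto_natCast_atTop_atTop.atTop_add tendsto_const_nhds).atTop_div_const two_pos)
    fun n z hz => ((hS n).2.2 z hz).le
  have herr := norm_sub_le_of_cutoff_corrections (S := fun n x => S n x) hψ01 hψ1
    (fun x => (hεpos x).le) fun n x hx => ((hS n).2.1 x).le.trans (hηε n x hx.le)
  refine ⟨g, hg, fun x => ?_⟩
  have hlim : ‖f x - g x‖ ≤ ε x / 2 := by
    refine le_of_tendsto ((tendsto_const_nhds.sub (hSg x)).norm) ?_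
    filter_upwards [tendsto_natCast_atTop_atTop.eventually_gt_atTop |x|] with n hn
    nlinarith [herr n x hn, hεpos x, pow_pos (one_half_pos (α := ℝ)) (n + 1)]
  linarith [hεpos x]
end
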